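/- Let $n \ge 2$, $d \ge 2$, $l \in \{2,\dots,d\}$, and let $X \in \mathbb{R}^{n \times d}$ be the Case-2 matrix with rows $X_1 = -\tfrac{1}{\sqrt{2}} e_1 + \tfrac{1}{\sqrt{2}} e_l$ and $X_i = \tfrac{1}{\sqrt{2}} e_1 + \tfrac{1}{\sqrt{2}} e_l$ for all $i \in \{2,\dots,n\}$. Let $0 < \varepsilon < 0.01$ and let $\bar{w} \in \mathbb{R}^d$ satisfy $\max_{i \in \{1,\dots,n\}} \|\bar{w} - X_i\|^2 \le \tfrac{1}{2} + \varepsilon$. Then $\bar{w}_l > \tfrac{3\sqrt{2}}{8}$ and $|\bar{w}_j| < 0.1$ for every coordinate $j \ne l$. -/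

import Mathlib

/-! A point within `√r` of both `a - p` and `a + p` lies, by the parallelogram law, within
`√(r - ‖p‖²)` of `a`. For the Case-2 instance `a = e_l/√2` and `p = e_1/√2`, so `‖p‖² = 1/2` and every
`ε`-approximate center `w̄` satisfies `‖w̄ - e_l/√2‖² ≤ ε < 0.1²`. Hence each coordinate of `w̄` is
within `0.1` of the corresponding coordinate of `e_l/√2`, and `1/√2 - 0.1 > 3√2/8`. -/

theorem norm_sub_sq_le_sub_norm_sq {E : Type*} [NormedAddCommGroup E] [InnerProductSpace ℝ E]
    {w a p : E} {r : ℝ} (h₁ : ‖w - (a - p)‖ ^ 2 ≤ r) (h₂ : ‖w - (a + p)‖ ^ 2 ≤ r) :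
    ‖w - a‖ ^ 2 ≤ r - ‖p‖ ^ 2 := by
  have hpar := parallelogram_law_with_norm ℝ (w - a) p
  rw [sub_add, sub_sub] at hpar
  linarith

theorem EuclideanSpace.abs_apply_lt_of_norm_sq_lt {ι : Type*} [Fintype ι]
    (x : EuclideanSpace ℝ ι) (j : ι) {δ : ℝ} (hδ : 0 ≤ δ) (h : ‖x‖ ^ 2 < δ ^ 2) : |x j| < δ := by
  have hj : |x j| ≤ ‖x‖ := PiLp.norm_apply_le x j
  exact abs_lt_of_sq_lt_sq (by nlinarith [abs_nonneg (x j), sq_abs (x j)]) hδ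

theorem norm_inv_sqrt_two_smul_single_sq {ι : Type*} [Fintype ι] [DecidableEq ι] (i : ι) :
    ‖(Real.sqrt 2)⁻¹ • EuclideanSpace.single i (1 : ℝ)‖ ^ 2 = 1 / 2 := by
  rw [norm_smul, PiLp.norm_single, norm_one, mul_one, norm_inv, Real.norm_eq_abs,
    abs_of_nonneg (Real.sqrt_nonneg 2), inv_pow, Real.sq_sqrt zero_le_two, one_div]

/-- Decoding step of the minimum-enclosing-ball lower bound, Case 2: any
`ε`-approximate center has a unique large coordinate, revealing the hidden
column index `l`. -/
theorem case2_meb_decoding (n d : ℕ) (hn : 2 ≤ n) (hd : 2 ≤ d)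
    (l : Fin d)
    (X : Fin n → EuclideanSpace ℝ (Fin d))
    (hX1 : ∀ i : Fin n, (i : ℕ) = 0 →
      X i = -((Real.sqrt 2)⁻¹ • EuclideanSpace.single (⟨0, by omega⟩ : Fin d) (1 : ℝ))
        + (Real.sqrt 2)⁻¹ • EuclideanSpace.single l (1 : ℝ))
    (hXi : ∀ i : Fin n, (i : ℕ) ≠ 0 →
      X i = (Real.sqrt 2)⁻¹ • EuclideanSpace.single (⟨0, by omega⟩ : Fin d) (1 : ℝ)
        + (Real.sqrt 2)⁻¹ • EuclideanSpace.single l (1 : ℝ))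
    (ε : ℝ) (hε1 : ε < 0.01)
    (wbar : EuclideanSpace ℝ (Fin d))
    (happrox : ∀ i : Fin n, ‖wbar - X i‖ ^ 2 ≤ 1 / 2 + ε) :
    wbar l > 3 * Real.sqrt 2 / 8 ∧ ∀ j : Fin d, j ≠ l → |wbar j| < 0.1 := by
  set c := (Real.sqrt 2)⁻¹
  set a := c • EuclideanSpace.single l (1 : ℝ)
  set p := c • EuclideanSpace.single (⟨0, by omega⟩ : Fin d) (1 : ℝ)
  have h₁ : ‖wbar - (a - p)‖ ^ 2 ≤ 1 / 2 + ε := by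
    simpa only [hX1 ⟨0, by omega⟩ rfl, neg_add_eq_sub] using happrox ⟨0, by omega⟩
  have h₂ : ‖wbar - (a + p)‖ ^ 2 ≤ 1 / 2 + ε := by
    simpa only [hXi ⟨1, by omega⟩ one_ne_zero, add_comm p] using happrox ⟨1, by omega⟩
  have hclose : ‖wbar - a‖ ^ 2 < 0.1 ^ 2 := by
    have := norm_sub_sq_le_sub_norm_sq h₁ h₂
    rw [norm_inv_sqrt_two_smul_single_sq] at this
    linarith
  have hcoord (j : Fin d) : |wbar j - a j| < 0.1 := by
    simpa using EuclideanSpace.abs_apply_lt_of_norm_sq_lt _ j (by norm_num) hclose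
  refine ⟨?_, fun j hj => by simpa [a, hj] using hcoord j⟩
  have hwl : |wbar l - c| < 0.1 := by simpa [a] using hcoord l
  have hc : c = Real.sqrt 2 / 2 := by
    simp only [c]
    field_simp
    exact (Real.sq_sqrt zero_le_two).symm
  have hsqrt : 0.8 < Real.sqrt 2 := by
    rw [Real.lt_sqrt (by norm_num)]; norm_num
  linarith [abs_lt.mp hwl]
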